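/- Suppose p > 1, n ≥ 3, a_{Bk} ≥ p and a_{kW} ≥ p for all relevant k ≠ B,W (with a_{BW} ≥ p as well), all entries at most p^3, and reciprocity holds. Then for every j ≠ B,W the LLSM weights satisfy w_j ≥ w_W (the worst alternative receives the smallest weight). -/

import Mathlib

/-!
Pass to logarithms: with `u k = log a_{Bk}` and `v k = log a_{kW}`, reciprocity in row `W` gives
`n (y_B - y_W) = ∑ₖ (u k + v k)`, and the LLSM equation for `j` reads
`2 (y_j - y_W) = (y_B - y_W) - u j + v j`. Every `u k` (`k ≠ B`) and `v k` (`k ≠ W`) is at least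
`L = log p`, while `u B = v W = 0`, so `2n (y_j - y_W) ≥ (2n - 4) L + (1 - n) u j + (n + 1) v j`,
and `u j ≤ 3L`, `v j ≥ L` make the right-hand side nonnegative.
-/

open Finset

theorem Finset.sum_add_card_compl_nsmul_le_sum {ι M : Type*} [Fintype ι] [DecidableEq ι]
    [AddCommMonoid M] [Preorder M] [AddLeftMono M] (s : Finset ι) {f : ι → M} {m : M}
    (hf : ∀ k ∉ s, m ≤ f k) : ∑ k ∈ s, f k + #sᶜ • m ≤ ∑ k, f k := by
  rw [← sum_add_sum_compl s f]
  gcongr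
  exact card_nsmul_le_sum _ _ _ fun k hk => hf k (mem_compl.mp hk)

theorem Finset.add_add_card_sub_two_mul_le_sum {ι : Type*} [Fintype ι] [DecidableEq ι]
    {f : ι → ℝ} {L : ℝ} {i j : ι} (hij : i ≠ j) (hf : ∀ k, k ≠ i → k ≠ j → L ≤ f k) :
    f i + f j + (Fintype.card ι - 2 : ℝ) * L ≤ ∑ k, f k := by
  have h := sum_add_card_compl_nsmul_le_sum {i, j} (f := f) (m := L) fun k hk => by
    simp only [mem_insert, mem_singleton, not_or] at hk
    exact hf k hk.1 hk.2
  have hcard : (#({i, j} : Finset ι)ᶜ : ℝ) = Fintype.card ι - 2 := by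
    have h2 : 2 ≤ Fintype.card ι := by simpa [card_pair hij] using card_le_univ {i, j}
    rw [card_compl, card_pair hij, Nat.cast_sub h2, Nat.cast_ofNat]
  rwa [sum_pair hij, nsmul_eq_mul, hcard] at h

theorem Real.log_eq_neg_log_of_mul_eq_one {a b : ℝ} (h : a * b = 1) : log a = -log b := by
  rw [eq_inv_of_mul_eq_one_left h, log_inv]

theorem le_of_llsm_log_equations {ι : Type*} [Fintype ι] [DecidableEq ι] {B W j : ι}
    (hjB : j ≠ B) (hjW : j ≠ W) {u v : ι → ℝ} {L : ℝ}
    (hu : ∀ k, k ≠ B → L ≤ u k) (huB : u B = 0) (hv : ∀ k, k ≠ W → L ≤ v k) (hvW : v W = 0)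
    (huj : u j ≤ 3 * L) {yB yW yj : ℝ}
    (hyBW : Fintype.card ι * (yB - yW) = ∑ k, (u k + v k))
    (hyj : 2 * yj = yB + yW - u j + v j) : yW ≤ yj := by
  have hsu := add_add_card_sub_two_mul_le_sum hjB.symm fun k hkB _ => hu k hkB
  have hsv := add_add_card_sub_two_mul_le_sum hjW.symm fun k hkW _ => hv k hkW
  rw [sum_add_distrib] at hyBW
  have hn : (1 : ℝ) ≤ Fintype.card ι := by exact_mod_cast Fintype.card_pos_iff.mpr ⟨j⟩
  have hju : 0 ≤ (Fintype.card ι - 1) * (3 * L - u j) := mul_nonneg (by linarith) (by linarith)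
  have hjv : 0 ≤ (Fintype.card ι + 1) * (v j - L) :=
    mul_nonneg (by linarith) (by linarith [hv j hjW])
  have hscaled : 2 * (Fintype.card ι * (yj - yW)) =
      Fintype.card ι * (yB - yW) + Fintype.card ι * (v j - u j) := by
    linear_combination (Fintype.card ι : ℝ) * hyj
  have h : 0 ≤ Fintype.card ι * (yj - yW) := by linarith
  exact sub_nonneg.mp <| (mul_nonneg_iff_of_pos_left (by linarith)).mp h

theorem bwm_worst_smallest_general (n : ℕ) (p : ℝ) (hp : 1 < p)
    (B W : Fin n)
    (a : Fin n → Fin n → ℝ)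
    (hpos : ∀ i j : Fin n, (i = B ∨ i = W ∨ j = B ∨ j = W) → 0 < a i j)
    (hdiag : ∀ i, a i i = 1)
    (hrec : ∀ i j : Fin n, (i = B ∨ i = W ∨ j = B ∨ j = W) → a i j * a j i = 1)
    (hB : ∀ k, k ≠ B → p ≤ a B k)
    (hW : ∀ k, k ≠ W → p ≤ a k W)
    (hub : ∀ i j : Fin n, (i = B ∨ i = W ∨ j = B ∨ j = W) → a i j ≤ p ^ 3)
    (y : Fin n → ℝ)
    (hyB : (n : ℝ) * y B = Real.log (∏ k, a B k))
    (hyW : (n : ℝ) * y W = Real.log (∏ k, a W k))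
    (hyj : ∀ j, j ≠ B → j ≠ W → 2 * y j = y B + y W + Real.log (a j B * a j W)) :
    ∀ j, j ≠ B → j ≠ W → Real.exp (y W) ≤ Real.exp (y j) := by
  intro j hjB hjW
  have hlog_ge : ∀ x, p ≤ x → Real.log p ≤ Real.log x := fun x =>
    Real.log_le_log (one_pos.trans hp)
  have hWk : ∀ k, Real.log (a W k) = -Real.log (a k W) := fun k =>
    Real.log_eq_neg_log_of_mul_eq_one (hrec W k (by simp))
  have hyBW : (n : ℝ) * (y B - y W) = ∑ k, (Real.log (a B k) + Real.log (a k W)) := by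
    rw [mul_sub, hyB, hyW, Real.log_prod fun k _ => (hpos B k (by simp)).ne',
      Real.log_prod fun k _ => (hpos W k (by simp)).ne', sum_add_distrib]
    simp only [hWk, sum_neg_distrib, sub_neg_eq_add]
  have hBj : Real.log (a B j) ≤ 3 * Real.log p :=
    calc Real.log (a B j) ≤ Real.log (p ^ 3) :=
          Real.log_le_log (hpos B j (by simp)) (hub B j (by simp))
      _ = 3 * Real.log p := by rw [Real.log_pow, Nat.cast_ofNat]
  refine Real.exp_le_exp.mpr <| le_of_llsm_log_equations hjB hjW
    (fun k hk => hlog_ge _ (hB k hk)) (by simp [hdiag]) (fun k hk => hlog_ge _ (hW k hk))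
    (by simp [hdiag]) hBj (by simpa using hyBW) ?_
  rw [hyj j hjB hjW, Real.log_mul (hpos j B (by simp)).ne' (hpos j W (by simp)).ne',
    Real.log_eq_neg_log_of_mul_eq_one (hrec j B (by simp))]
  ring

/-- the symmetric second case of Theorem 1: under the bounds
`a_{Bk} ≥ p`, `a_{kW} ≥ p`, `a_{BW} ≥ p`, all entries at most `p^3`, the worst
alternative receives the smallest LLSM weight: `w_j ≥ w_W` for all `j ≠ B,W`. -/
theorem bwm_worst_smallest (n : ℕ) (hn : 3 ≤ n) (p : ℝ) (hp : 1 < p)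
    (B W : Fin n) (hBW : B ≠ W)
    (a : Fin n → Fin n → ℝ)
    (hpos : ∀ i j : Fin n, (i = B ∨ i = W ∨ j = B ∨ j = W) → 0 < a i j)
    (hdiag : ∀ i, a i i = 1)
    (hrec : ∀ i j : Fin n, (i = B ∨ i = W ∨ j = B ∨ j = W) → a i j * a j i = 1)
    (hB : ∀ k, k ≠ B → p ≤ a B k)
    (hW : ∀ k, k ≠ W → p ≤ a k W)
    (hBWp : p ≤ a B W)
    (hub : ∀ i j : Fin n, (i = B ∨ i = W ∨ j = B ∨ j = W) → a i j ≤ p ^ 3)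
    (y : Fin n → ℝ)
    (hyB : (n : ℝ) * y B = Real.log (∏ k, a B k))
    (hyW : (n : ℝ) * y W = Real.log (∏ k, a W k))
    (hyj : ∀ j, j ≠ B → j ≠ W → 2 * y j = y B + y W + Real.log (a j B * a j W)) :
    ∀ j, j ≠ B → j ≠ W → Real.exp (y W) ≤ Real.exp (y j) :=
  bwm_worst_smallest_general n p hp B W a hpos hdiag hrec hB hW hub y hyB hyW hyj
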